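/- Let R be a commutative ring with 3 = 0, let b be a unit of R, let c, d ∈ R with d³ = 0, and let a ∈ R with a³ = 0. Set h = b·X + c + d·X³, g = X + a·X³, and g′ = X + a·b⁻¹·c³ + a·b²·X³ in R[X]. Then g.comp h = h.comp g′; that is, the conjugate of the α₃-substitution g by h is g′. -/

import Mathlib

/-!
Modulo 3 cubing is additive, so `h(x)³ = b³x³ + c³ + d³x⁹` and `g′(x)³ = x³ + (ab⁻¹c³)³ + (ab²)³x⁹`.
With `a³ = d³ = 0` both sides of `g(h(x)) = h(g′(x))` reduce to `bx + c + dx³ + ab³x³ + ac³`.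
-/

open Polynomial

theorem add_pow_three_of_three_eq_zero {S : Type*} [CommRing S] (h3 : (3 : S) = 0) (x y : S) :
    (x + y) ^ 3 = x ^ 3 + y ^ 3 := by
  linear_combination (x ^ 2 * y + x * y ^ 2) * h3

theorem alpha3_conj_apply {S : Type*} [CommRing S] (h3 : (3 : S) = 0)
    {b bi : S} (hb : b * bi = 1) (c : S) {d : S} (hd : d ^ 3 = 0) {a : S} (ha : a ^ 3 = 0)
    (x : S) :
    (b * x + c + d * x ^ 3) + a * (b * x + c + d * x ^ 3) ^ 3 =
      b * (x + a * bi * c ^ 3 + a * b ^ 2 * x ^ 3) + c +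
        d * (x + a * bi * c ^ 3 + a * b ^ 2 * x ^ 3) ^ 3 := by
  simp only [add_pow_three_of_three_eq_zero h3]
  linear_combination (a * x ^ 9) * hd - (d * bi ^ 3 * c ^ 9 + d * b ^ 6 * x ^ 9) * ha -
    (a * c ^ 3) * hb

/-- In characteristic 3, the conjugate of the α₃-substitution
`g = X + a·X³` (with `a³ = 0`) by `h = b·X + c + d·X³` is
`g′ = X + ab⁻¹c³ + ab²·X³`, i.e. `g ∘ h = h ∘ g′`. -/
theorem alpha3_conj_char_three {R : Type*} [CommRing R] (h3 : (3 : R) = 0)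
    (b : Rˣ) (c d : R) (hd : d ^ 3 = 0) (a : R) (ha : a ^ 3 = 0) :
    let bi : R := ((b⁻¹ : Rˣ) : R)
    let h : R[X] := C (b : R) * X + C c + C d * X ^ 3
    let g : R[X] := X + C a * X ^ 3
    let g' : R[X] := X + C (a * bi * c ^ 3) + C (a * (b : R) ^ 2) * X ^ 3
    g.comp h = h.comp g' := by
  intro bi h g g'
  have h3X : (3 : R[X]) = 0 := by rw [← map_ofNat C 3, h3, C_0]
  have hbX : C (b : R) * C bi = 1 := by rw [← C_mul, Units.mul_inv, C_1]
  have hdX : C d ^ 3 = 0 := by rw [← C_pow, hd, C_0]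
  have haX : C a ^ 3 = 0 := by rw [← C_pow, ha, C_0]
  simp only [h, g, g', add_comp, mul_comp, X_comp, C_comp, pow_comp, C_mul, C_pow]
  exact alpha3_conj_apply h3X hbX (C c) hdX haX X
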